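/- Let $f \in L^2(\mathbb{R}^d)$, $n > k$ integers, $df_n = E_n f - E_{n-1} f$ the dyadic martingale difference at scale $2^{-n}$, and $M_k$ the averaging operator over the ball $B_k$ of radius $2^{-k}$. Then $\|M_k (df_n)\|_{L^2}^2 \leq C_d\, 2^{k-n} \|df_n\|_{L^2}^2$, with $C_d$ depending only on $d$. -/

import Mathlib

/-!
On every dyadic cube of side `2^(-(n-1))` the difference `df_n` has mean zero, and such a cube
has diameter `δ = √d 2^(-(n-1))`. So in `∫_{B(x,r)} df_n` the cubes inside the ball contribute
nothing, and the cubes meeting its boundary lie in the annulus `A(x) = {r - δ ≤ |y - x| ≤ r + δ}`: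
`|M_k df_n(x)| ≤ |B_r|⁻¹ ∫_{A(x)} |df_n|`. Cauchy–Schwarz on `A(x)` and Fubini, using that
`y ∈ A(x) ↔ x ∈ A(y)`, give `‖M_k df_n‖₂ ≤ (|A| / |B_r|) ‖df_n‖₂`, and `|A| / |B_r| ≲_d δ / r`,
which is of order `2^(k-n)` for `r = 2^(-k)`.
-/

open MeasureTheory Metric Set Function Module
open scoped ENNReal

def dyadicCubeOf (d : ℕ) (n : ℤ) (x : EuclideanSpace ℝ (Fin d)) :
    Set (EuclideanSpace ℝ (Fin d)) :=
  {y | ∀ i, ⌊(2:ℝ) ^ n * y i⌋ = ⌊(2:ℝ) ^ n * x i⌋}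

noncomputable def dyadicCondExp (d : ℕ) (n : ℤ) (f : EuclideanSpace ℝ (Fin d) → ℝ)
    (x : EuclideanSpace ℝ (Fin d)) : ℝ :=
  ⨍ y in dyadicCubeOf d n x, f y

noncomputable def dyadicDiff (d : ℕ) (n : ℤ) (f : EuclideanSpace ℝ (Fin d) → ℝ)
    (x : EuclideanSpace ℝ (Fin d)) : ℝ :=
  dyadicCondExp d n f x - dyadicCondExp d (n - 1) f x

noncomputable def ballAvg (d : ℕ) (k : ℤ) (g : EuclideanSpace ℝ (Fin d) → ℝ)
    (x : EuclideanSpace ℝ (Fin d)) : ℝ :=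
  ⨍ y in Metric.ball x ((2:ℝ) ^ (-k)), g y

section Average

variable {α E : Type*} [MeasurableSpace α] [NormedAddCommGroup E] [NormedSpace ℝ E]

lemma enorm_setAverage_le (μ : Measure α) (s : Set α) (g : α → E) :
    ‖⨍ y in s, g y ∂μ‖ₑ ≤ (μ s)⁻¹ * ‖∫ y in s, g y ∂μ‖ₑ := by
  rw [setAverage_eq, enorm_smul, measureReal_def, ← ENNReal.toReal_inv,
    Real.enorm_eq_ofReal ENNReal.toReal_nonneg]
  gcongr
  exact ENNReal.ofReal_toReal_le

end Average

section Partition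

variable {α ι E : Type*} [PseudoMetricSpace α] {s : Set α} {x : α} {r δ : ℝ}

lemma subset_closedBall_diff_ball (hs : ∀ y ∈ s, ∀ z ∈ s, dist y z ≤ δ)
    (hin : (s ∩ ball x r).Nonempty) (hout : ¬ s ⊆ ball x r) :
    s ⊆ closedBall x (r + δ) \ ball x (r - δ) := by
  obtain ⟨p, hps, hpx⟩ := hin
  obtain ⟨q, hqs, hqx⟩ := not_subset.1 hout
  rw [mem_ball] at hpx hqx
  intro y hy
  rw [mem_sdiff, mem_closedBall, mem_ball, not_lt]
  constructor
  · linarith [dist_triangle y p x, hs y hy p hps]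
  · linarith [dist_triangle q y x, hs q hqs y hy]

variable [MeasurableSpace α] {μ : Measure α} [NormedAddCommGroup E] [NormedSpace ℝ E] {g : α → E}

lemma enorm_setIntegral_inter_ball_le (hs : ∀ y ∈ s, ∀ z ∈ s, dist y z ≤ δ)
    (hmean : ∫ y in s, g y ∂μ = 0) :
    ‖∫ y in s ∩ ball x r, g y ∂μ‖ₑ ≤
      ∫⁻ y in s ∩ (closedBall x (r + δ) \ ball x (r - δ)), ‖g y‖ₑ ∂μ := by
  by_cases hout : s ⊆ ball x r
  · simp [inter_eq_left.2 hout, hmean]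
  rcases (s ∩ ball x r).eq_empty_or_nonempty with hin | hin
  · simp [hin]
  rw [inter_eq_left.2 (subset_closedBall_diff_ball hs hin hout)]
  exact (enorm_integral_le_lintegral_enorm _).trans (lintegral_mono_set inter_subset_left)

lemma enorm_setIntegral_ball_le_of_partition [OpensMeasurableSpace α] [Countable ι]
    {P : ι → Set α} (hPm : ∀ i, MeasurableSet (P i)) (hPd : Pairwise (Disjoint on P))
    (hPu : ⋃ i, P i = univ) (hdiam : ∀ i, ∀ y ∈ P i, ∀ z ∈ P i, dist y z ≤ δ)
    (hmean : ∀ i, ∫ y in P i, g y ∂μ = 0) (hg : IntegrableOn g (ball x r) μ) :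
    ‖∫ y in ball x r, g y ∂μ‖ₑ ≤ ∫⁻ y in closedBall x (r + δ) \ ball x (r - δ), ‖g y‖ₑ ∂μ := by
  have hcover (t : Set α) : ⋃ i, P i ∩ t = t := by rw [← iUnion_inter, hPu, univ_inter]
  have hdisj (t : Set α) : Pairwise (Disjoint on fun i => P i ∩ t) := fun i j hij =>
    (hPd hij).mono inter_subset_left inter_subset_left
  have hA : MeasurableSet (closedBall x (r + δ) \ ball x (r - δ)) :=
    measurableSet_closedBall.diff measurableSet_ball
  calc ‖∫ y in ball x r, g y ∂μ‖ₑ = ‖∑' i, ∫ y in P i ∩ ball x r, g y ∂μ‖ₑ := by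
        rw [← integral_iUnion (fun i => (hPm i).inter measurableSet_ball) (hdisj _)
          (by rwa [hcover]), hcover]
    _ ≤ ∑' i, ‖∫ y in P i ∩ ball x r, g y ∂μ‖ₑ := enorm_tsum_le_tsum_enorm
    _ ≤ ∑' i, ∫⁻ y in P i ∩ (closedBall x (r + δ) \ ball x (r - δ)), ‖g y‖ₑ ∂μ :=
        ENNReal.tsum_le_tsum fun i => enorm_setIntegral_inter_ball_le (hdiam i) (hmean i)
    _ = ∫⁻ y in closedBall x (r + δ) \ ball x (r - δ), ‖g y‖ₑ ∂μ := by
        rw [← lintegral_iUnion (fun i => (hPm i).inter hA) (hdisj _), hcover]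

end Partition

section Lebesgue

variable {α E : Type*} [MeasurableSpace α] {μ : Measure α} [NormedAddCommGroup E]

lemma eLpNorm_two_sq (u : α → E) : eLpNorm u 2 μ ^ 2 = ∫⁻ x, ‖u x‖ₑ ^ 2 ∂μ := by
  have h := eLpNorm_nnreal_pow_eq_lintegral (μ := μ) (f := u) (p := 2) two_ne_zero
  simpa [ENNReal.rpow_two] using h

lemma sq_setLIntegral_le_measure_mul (s : Set α) {F : α → ℝ≥0∞}
    (hF : AEMeasurable F (μ.restrict s)) :
    (∫⁻ y in s, F y ∂μ) ^ 2 ≤ μ s * ∫⁻ y in s, F y ^ 2 ∂μ := by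
  have h := ENNReal.lintegral_mul_le_Lp_mul_Lq (μ.restrict s) Real.HolderConjugate.two_two hF
    aemeasurable_const (g := fun _ => 1)
  simp only [Pi.mul_apply, mul_one, ENNReal.one_rpow, setLIntegral_one] at h
  calc (∫⁻ y in s, F y ∂μ) ^ 2
      ≤ ((∫⁻ y in s, F y ^ (2 : ℝ) ∂μ) ^ (1 / 2 : ℝ) * μ s ^ (1 / 2 : ℝ)) ^ 2 := by gcongr
    _ = μ s * ∫⁻ y in s, F y ^ 2 ∂μ := by
        rw [mul_pow, ← ENNReal.rpow_mul_natCast, ← ENNReal.rpow_mul_natCast]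
        simp [mul_comm]

variable [SFinite μ] {A : α → Set α} {N : ℝ≥0∞}

lemma lintegral_setLIntegral_eq_mul_of_symmetric (hA : MeasurableSet {q : α × α | q.2 ∈ A q.1})
    (hsymm : ∀ x y, y ∈ A x ↔ x ∈ A y) (hN : ∀ x, μ (A x) = N) {G : α → ℝ≥0∞}
    (hG : Measurable G) :
    ∫⁻ x, ∫⁻ y in A x, G y ∂μ ∂μ = N * ∫⁻ y, G y ∂μ := by
  have hAx (x : α) : MeasurableSet (A x) := measurable_prodMk_left hA
  calc ∫⁻ x, ∫⁻ y in A x, G y ∂μ ∂μ = ∫⁻ x, ∫⁻ y, (A x).indicator G y ∂μ ∂μ := by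
        simp_rw [lintegral_indicator (hAx _)]
    _ = ∫⁻ y, ∫⁻ x, (A y).indicator (fun _ => G y) x ∂μ ∂μ := by
        rw [lintegral_lintegral_swap (f := fun x y => (A x).indicator G y)
          ((hG.comp measurable_snd).indicator hA).aemeasurable]
        refine lintegral_congr fun y => lintegral_congr fun x => ?_
        by_cases h : y ∈ A x
        · rw [indicator_of_mem h, indicator_of_mem ((hsymm x y).1 h)]
        · rw [indicator_of_notMem h, indicator_of_notMem (mt (hsymm x y).2 h)]
    _ = N * ∫⁻ y, G y ∂μ := by
        simp_rw [lintegral_indicator_const (hAx _), hN, mul_comm _ N]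
        exact lintegral_const_mul N hG

lemma eLpNorm_two_sq_le_of_enorm_le_setLIntegral [MeasurableSpace E] [OpensMeasurableSpace E]
    {F : Type*} [NormedAddCommGroup F]
    (hA : MeasurableSet {q : α × α | q.2 ∈ A q.1}) (hsymm : ∀ x y, y ∈ A x ↔ x ∈ A y)
    (hN : ∀ x, μ (A x) = N) {g : α → E} (hg : Measurable g) {u : α → F} {c : ℝ≥0∞}
    (hu : ∀ x, ‖u x‖ₑ ≤ c * ∫⁻ y in A x, ‖g y‖ₑ ∂μ) :
    eLpNorm u 2 μ ^ 2 ≤ (c * N) ^ 2 * eLpNorm g 2 μ ^ 2 := by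
  have hG : Measurable fun y => ‖g y‖ₑ ^ 2 := hg.enorm.pow_const 2
  have hpt (x : α) : ‖u x‖ₑ ^ 2 ≤ ∫⁻ y in A x, c ^ 2 * N * ‖g y‖ₑ ^ 2 ∂μ := by
    rw [lintegral_const_mul _ hG, ← hN x, mul_assoc]
    calc ‖u x‖ₑ ^ 2 ≤ (c * ∫⁻ y in A x, ‖g y‖ₑ ∂μ) ^ 2 := by gcongr; exact hu x
      _ ≤ c ^ 2 * (μ (A x) * ∫⁻ y in A x, ‖g y‖ₑ ^ 2 ∂μ) := by
        rw [mul_pow]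
        gcongr
        exact sq_setLIntegral_le_measure_mul _ hg.enorm.aemeasurable
  calc eLpNorm u 2 μ ^ 2 ≤ ∫⁻ x, ∫⁻ y in A x, c ^ 2 * N * ‖g y‖ₑ ^ 2 ∂μ ∂μ := by
        rw [eLpNorm_two_sq]; exact lintegral_mono hpt
    _ = (c * N) ^ 2 * eLpNorm g 2 μ ^ 2 := by
        rw [lintegral_setLIntegral_eq_mul_of_symmetric hA hsymm hN (hG.const_mul _),
          lintegral_const_mul _ hG, eLpNorm_two_sq]
        ring

end Lebesgue

lemma pow_sub_pow_le_mul {a b : ℝ} (hb : 0 ≤ b) (hba : b ≤ a) (n : ℕ) :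
    a ^ n - b ^ n ≤ n * (a - b) * a ^ (n - 1) := by
  have ha : 0 ≤ a := hb.trans hba
  have hsum : ∑ i ∈ Finset.range n, a ^ i * b ^ (n - 1 - i) ≤ n * a ^ (n - 1) := by
    calc ∑ i ∈ Finset.range n, a ^ i * b ^ (n - 1 - i)
        ≤ ∑ i ∈ Finset.range n, a ^ i * a ^ (n - 1 - i) := by gcongr
      _ = n * a ^ (n - 1) := by
        rw [Finset.sum_congr rfl fun i hi => by
          rw [← pow_add, Nat.add_sub_cancel' (by have := Finset.mem_range.1 hi; omega)]]
        simp
  rw [← geom_sum₂_mul]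
  nlinarith

section Haar

variable {E : Type*} [NormedAddCommGroup E] [MeasurableSpace E] [BorelSpace E] (μ : Measure E)
  [μ.IsAddHaarMeasure]

lemma addHaar_closedBall_diff_ball_center (x : E) (R ρ : ℝ) :
    μ (closedBall x R \ ball x ρ) = μ (closedBall 0 R \ ball 0 ρ) := by
  have : closedBall x R \ ball x ρ = (fun y => -x + y) ⁻¹' (closedBall 0 R \ ball 0 ρ) := by
    ext y; simp [dist_eq_norm, neg_add_eq_sub]
  rw [this, measure_preimage_add]

variable [NormedSpace ℝ E] [FiniteDimensional ℝ E]

lemma addHaar_closedBall_diff_ball_div_ball_le [Nontrivial E] {r δ : ℝ} (hr : 0 < r)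
    (hδ : 0 ≤ δ) :
    μ (closedBall 0 (r + δ) \ ball 0 (r - δ)) / μ (ball 0 r) ≤
      ENNReal.ofReal (2 * finrank ℝ E * (δ / r) * (1 + δ / r) ^ (finrank ℝ E - 1)) := by
  set d := finrank ℝ E
  set s := max (r - δ) 0 with hs_def
  have hs : 0 ≤ s := le_max_right _ _
  have hsR : s ≤ r + δ := max_le (by linarith) (by linarith)
  have hball : ball (0 : E) (r - δ) = ball 0 s := by
    rcases le_total (r - δ) 0 with h | h
    · rw [ball_eq_empty.2 h, hs_def, max_eq_right h, ball_zero]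
    · rw [hs_def, max_eq_left h]
  have hV0 : μ (ball (0 : E) 1) ≠ 0 := (measure_ball_pos μ 0 one_pos).ne'
  have hV : μ (ball (0 : E) 1) ≠ ∞ := measure_ball_lt_top.ne
  rw [hball, measure_sdiff (ball_subset_closedBall.trans (closedBall_subset_closedBall hsR))
      measurableSet_ball.nullMeasurableSet measure_ball_lt_top.ne,
    Measure.addHaar_closedBall μ 0 (hs.trans hsR), Measure.addHaar_ball μ 0 hs,
    Measure.addHaar_ball μ 0 hr.le,
    ← ENNReal.sub_mul fun _ _ => hV, ENNReal.mul_div_mul_right _ _ hV0 hV,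
    ← ENNReal.ofReal_sub _ (by positivity), ← ENNReal.ofReal_div_of_pos (by positivity)]
  gcongr
  have hd : d - 1 + 1 = d := Nat.sub_add_cancel finrank_pos
  have hR : r + δ = r * (1 + δ / r) := by field_simp
  calc ((r + δ) ^ d - s ^ d) / r ^ d ≤ d * (2 * δ) * (r + δ) ^ (d - 1) / r ^ d := by
        gcongr
        refine (pow_sub_pow_le_mul hs hsR d).trans ?_
        gcongr
        linarith [le_max_left (r - δ) 0]
    _ = 2 * d * (δ / r) * (1 + δ / r) ^ (d - 1) := by
        rw [hR, mul_pow, show r ^ d = r * r ^ (d - 1) by rw [← pow_succ', hd]]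
        field_simp

theorem eLpNorm_ballAverage_sq_le_of_partition [Nontrivial E] {F ι : Type*}
    [NormedAddCommGroup F] [NormedSpace ℝ F] [MeasurableSpace F] [OpensMeasurableSpace F]
    [Countable ι] {P : ι → Set E} (hPm : ∀ i, MeasurableSet (P i))
    (hPd : Pairwise (Disjoint on P)) (hPu : ⋃ i, P i = univ) {δ : ℝ} (hδ : 0 ≤ δ)
    (hdiam : ∀ i, ∀ y ∈ P i, ∀ z ∈ P i, dist y z ≤ δ) {g : E → F} (hgm : Measurable g)
    (hg : LocallyIntegrable g μ) (hmean : ∀ i, ∫ y in P i, g y ∂μ = 0) {r : ℝ} (hr : 0 < r) :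
    eLpNorm (fun x => ⨍ y in ball x r, g y ∂μ) 2 μ ^ 2 ≤
      ENNReal.ofReal (2 * finrank ℝ E * (δ / r) * (1 + δ / r) ^ (finrank ℝ E - 1)) ^ 2 *
        eLpNorm g 2 μ ^ 2 := by
  set A : E → Set E := fun x => closedBall x (r + δ) \ ball x (r - δ)
  have hA : MeasurableSet {q : E × E | q.2 ∈ A q.1} := by
    have hdist : Measurable fun q : E × E => dist q.2 q.1 := by fun_prop
    exact (measurableSet_le hdist measurable_const).diff (measurableSet_lt hdist measurable_const)
  have hsymm (x y : E) : y ∈ A x ↔ x ∈ A y := by simp [A, dist_comm]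
  have hu (x : E) :
      ‖⨍ y in ball x r, g y ∂μ‖ₑ ≤ (μ (ball 0 r))⁻¹ * ∫⁻ y in A x, ‖g y‖ₑ ∂μ := by
    have hgx : IntegrableOn g (ball x r) μ :=
      (hg.integrableOn_isCompact (isCompact_closedBall x r)).mono_set ball_subset_closedBall
    rw [← Measure.addHaar_ball_center μ x r]
    refine (enorm_setAverage_le μ _ g).trans ?_
    gcongr
    exact enorm_setIntegral_ball_le_of_partition hPm hPd hPu hdiam hmean hgx
  refine (eLpNorm_two_sq_le_of_enorm_le_setLIntegral hA hsymm
    (addHaar_closedBall_diff_ball_center μ · _ _) hgm hu).trans ?_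
  rw [mul_comm (μ (ball 0 r))⁻¹, ← div_eq_mul_inv]
  gcongr
  exact addHaar_closedBall_diff_ball_div_ball_le μ hr hδ

end Haar

noncomputable def dyadicIndex (d : ℕ) (j : ℤ) (x : EuclideanSpace ℝ (Fin d)) : Fin d → ℤ :=
  fun i => ⌊(2:ℝ) ^ j * x i⌋

def dyadicCube (d : ℕ) (j : ℤ) (m : Fin d → ℤ) : Set (EuclideanSpace ℝ (Fin d)) :=
  dyadicIndex d j ⁻¹' {m}

section Dyadic

variable {d : ℕ} {j n : ℤ} {m : Fin d → ℤ} {f : EuclideanSpace ℝ (Fin d) → ℝ}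
  {x y z : EuclideanSpace ℝ (Fin d)}

lemma dyadicCubeOf_eq_dyadicCube : dyadicCubeOf d j x = dyadicCube d j (dyadicIndex d j x) := by
  ext y
  simp [dyadicCubeOf, dyadicCube, dyadicIndex, funext_iff]

lemma mem_dyadicCube_self : x ∈ dyadicCube d j (dyadicIndex d j x) := rfl

lemma measurable_dyadicIndex : Measurable (dyadicIndex d j) :=
  measurable_pi_lambda _ fun i => Int.measurable_floor.comp (by fun_prop)

lemma measurableSet_dyadicCube : MeasurableSet (dyadicCube d j m) :=
  measurable_dyadicIndex (measurableSet_singleton m)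

lemma pairwise_disjoint_dyadicCube : Pairwise (Disjoint on dyadicCube d j) :=
  pairwise_disjoint_fiber _

lemma iUnion_dyadicCube : ⋃ m, dyadicCube d j m = univ :=
  eq_univ_of_forall fun _ => mem_iUnion.2 ⟨_, mem_dyadicCube_self⟩

lemma dist_le_of_mem_dyadicCube (hy : y ∈ dyadicCube d j m) (hz : z ∈ dyadicCube d j m) :
    dist y z ≤ √d * 2 ^ (-j) := by
  have hcoord (i : Fin d) : dist (y i) (z i) ≤ 2 ^ (-j) := by
    have h := Int.abs_sub_lt_one_of_floor_eq_floor (congrFun (hy.trans hz.symm) i)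
    rw [← mul_sub, abs_mul, abs_of_pos (by positivity)] at h
    rw [Real.dist_eq, zpow_neg, ← one_div, le_div_iff₀' (by positivity)]
    exact h.le
  calc dist y z = √(∑ i, dist (y i) (z i) ^ 2) := EuclideanSpace.dist_eq y z
    _ ≤ √(∑ _i : Fin d, (2 ^ (-j) : ℝ) ^ 2) := by gcongr with i; exact hcoord i
    _ = √d * 2 ^ (-j) := by simp [Real.sqrt_mul (Nat.cast_nonneg d), Real.sqrt_sq, zpow_nonneg]

lemma isBounded_dyadicCube : Bornology.IsBounded (dyadicCube d j m) :=
  isBounded_iff.2 ⟨_, fun _ hy _ hz => dist_le_of_mem_dyadicCube hy hz⟩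

lemma volume_dyadicCube_lt_top : volume (dyadicCube d j m) < ∞ :=
  isBounded_dyadicCube.measure_lt_top

lemma integrableOn_dyadicCube (hf : LocallyIntegrable f) : IntegrableOn f (dyadicCube d j m) :=
  (hf.integrableOn_isCompact isBounded_dyadicCube.isCompact_closure).mono_set subset_closure

lemma dyadicCondExp_eq_of_mem (hx : x ∈ dyadicCube d j m) :
    dyadicCondExp d j f x = ⨍ y in dyadicCube d j m, f y := by
  rw [dyadicCondExp, dyadicCubeOf_eq_dyadicCube, show dyadicIndex d j x = m from hx]

lemma measurable_dyadicCondExp : Measurable (dyadicCondExp d j f) := by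
  have : dyadicCondExp d j f = (fun m => ⨍ y in dyadicCube d j m, f y) ∘ dyadicIndex d j := by
    ext x; exact dyadicCondExp_eq_of_mem mem_dyadicCube_self
  rw [this]
  exact (measurable_of_countable _).comp measurable_dyadicIndex

lemma integrableOn_dyadicCondExp : IntegrableOn (dyadicCondExp d j f) (dyadicCube d j m) :=
  (integrableOn_const volume_dyadicCube_lt_top.ne).congr_fun
    (fun _ hx => (dyadicCondExp_eq_of_mem hx).symm) measurableSet_dyadicCube

lemma setIntegral_dyadicCondExp :
    ∫ y in dyadicCube d j m, dyadicCondExp d j f y = ∫ y in dyadicCube d j m, f y := by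
  have : Fact (volume (dyadicCube d j m) < ∞) := ⟨volume_dyadicCube_lt_top⟩
  rw [setIntegral_congr_fun measurableSet_dyadicCube fun _ hx => dyadicCondExp_eq_of_mem hx]
  exact integral_average _ _

lemma dyadicIndex_sub_one (i : Fin d) : dyadicIndex d (n - 1) x i = dyadicIndex d n x i / 2 := by
  have h : (2:ℝ) ^ (n - 1) * x i = (2:ℝ) ^ n * x i / (2 : ℕ) := by
    rw [zpow_sub_one₀ two_ne_zero]; push_cast; ring
  simp only [dyadicIndex, h]
  exact Int.floor_div_natCast _ 2

lemma dyadicCube_sub_one_eq_iUnion : dyadicCube d (n - 1) m =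
    ⋃ b : Fin d → Fin 2, dyadicCube d n (fun i => 2 * m i + b i) := by
  ext x
  simp only [dyadicCube, mem_preimage, mem_singleton_iff, mem_iUnion, funext_iff,
    dyadicIndex_sub_one]
  constructor
  · intro h
    refine ⟨fun i => ⟨(dyadicIndex d n x i % 2).toNat, by omega⟩, fun i => ?_⟩
    have := h i
    dsimp only
    omega
  · rintro ⟨b, hb⟩ i
    have := hb i
    omega

lemma setIntegral_dyadicCube_sub_one_dyadicCondExp (hf : IntegrableOn f (dyadicCube d (n - 1) m)) :
    ∫ y in dyadicCube d (n - 1) m, dyadicCondExp d n f y = ∫ y in dyadicCube d (n - 1) m, f y := by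
  have hinj : Injective fun (b : Fin d → Fin 2) (i : Fin d) => 2 * m i + b i :=
    fun b b' h => funext fun i => Fin.ext (by have := congrFun h i; dsimp only at this; omega)
  have hdisj := (pairwise_disjoint_dyadicCube (d := d) (j := n)).comp_of_injective hinj
  rw [dyadicCube_sub_one_eq_iUnion] at hf ⊢
  rw [integral_iUnion (fun _ => measurableSet_dyadicCube) hdisj
      ((integrableOn_finite_iUnion).2 fun _ => integrableOn_dyadicCondExp),
    integral_iUnion (fun _ => measurableSet_dyadicCube) hdisj hf]
  simp only [setIntegral_dyadicCondExp]

lemma setIntegral_dyadicDiff_eq_zero (hf : IntegrableOn f (dyadicCube d (n - 1) m)) :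
    ∫ y in dyadicCube d (n - 1) m, dyadicDiff d n f y = 0 := by
  have hn : IntegrableOn (dyadicCondExp d n f) (dyadicCube d (n - 1) m) := by
    rw [dyadicCube_sub_one_eq_iUnion]
    exact integrableOn_finite_iUnion.2 fun _ => integrableOn_dyadicCondExp
  simp only [dyadicDiff]
  rw [integral_sub hn integrableOn_dyadicCondExp,
    setIntegral_dyadicCube_sub_one_dyadicCondExp hf, setIntegral_dyadicCondExp, sub_self]

end Dyadic

/-- The ratio bound of `eLpNorm_ballAverage_sq_le_of_partition` for `r = 2^(-k)` and the
diameter `δ = √d 2^(-(n-1))` of the dyadic cubes of side `2^(-(n-1))`. -/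
lemma sq_dyadic_annulus_ratio_le (d : ℕ) {k n : ℤ} (hkn : k < n) :
    (2 * d * (√d * 2 ^ (-(n - 1)) / 2 ^ (-k)) * (1 + √d * 2 ^ (-(n - 1)) / 2 ^ (-k)) ^ (d - 1)) ^ 2
      ≤ ((4 * d * √d * (1 + √d) ^ (d - 1)) ^ 2 + 1) * 2 ^ (k - n) := by
  have ht : √d * (2:ℝ) ^ (-(n - 1)) / 2 ^ (-k) = 2 * √d * 2 ^ (k - n) := by
    rw [div_eq_mul_inv, ← zpow_neg, neg_neg, mul_assoc, ← zpow_add₀ two_ne_zero,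
      show -(n - 1) + k = 1 + (k - n) by ring, zpow_add₀ two_ne_zero, zpow_one]
    ring
  have hu : (2:ℝ) ^ (k - n) ≤ 1 / 2 := by
    rw [one_div, ← zpow_neg_one]
    exact zpow_le_zpow_right₀ one_le_two (by omega)
  rw [ht]
  set u : ℝ := 2 ^ (k - n)
  set C₀ := 4 * d * √d * (1 + √d) ^ (d - 1)
  have hC₀ : 2 * d * (2 * √d * u) * (1 + 2 * √d * u) ^ (d - 1) ≤ C₀ * u := by
    have : (1 + 2 * √d * u) ^ (d - 1) ≤ (1 + √d) ^ (d - 1) := by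
      gcongr
      nlinarith [Real.sqrt_nonneg d]
    calc 2 * d * (2 * √d * u) * (1 + 2 * √d * u) ^ (d - 1)
        ≤ 2 * d * (2 * √d * u) * (1 + √d) ^ (d - 1) := by gcongr
      _ = C₀ * u := by ring
  have hu0 : 0 < u := by positivity
  calc (2 * d * (2 * √d * u) * (1 + 2 * √d * u) ^ (d - 1)) ^ 2 ≤ (C₀ * u) ^ 2 := by gcongr
    _ ≤ (C₀ ^ 2 + 1) * u := by nlinarith [sq_nonneg C₀]

lemma dyadicDiff_of_dim_zero (n : ℤ) (f : EuclideanSpace ℝ (Fin 0) → ℝ) : dyadicDiff 0 n f = 0 := by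
  have hcube (j : ℤ) (x : EuclideanSpace ℝ (Fin 0)) : dyadicCubeOf 0 j x = univ :=
    eq_univ_of_forall fun _ i => i.elim0
  funext x
  simp [dyadicDiff, dyadicCondExp, hcube]

/-- For `n > k`, `‖M_k(df_n)‖₂² ≤ C_d 2^{k-n} ‖df_n‖₂²`. -/
theorem ballAvg_martingale_diff_off_diagonal (d : ℕ) :
    ∃ C : ℝ, 0 < C ∧ ∀ (f : EuclideanSpace ℝ (Fin d) → ℝ), MemLp f 2 volume →
      ∀ (n k : ℤ), k < n →
      eLpNorm (fun x => ballAvg d k (dyadicDiff d n f) x) 2 volume ^ 2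
        ≤ ENNReal.ofReal (C * (2:ℝ) ^ (k - n)) *
            eLpNorm (dyadicDiff d n f) 2 volume ^ 2 := by
  set C₀ : ℝ := 4 * d * √d * (1 + √d) ^ (d - 1)
  refine ⟨C₀ ^ 2 + 1, by positivity, fun f hf n k hkn => ?_⟩
  rcases Nat.eq_zero_or_pos d with rfl | hd
  · simp [dyadicDiff_of_dim_zero, ballAvg]
  have : NeZero d := ⟨hd.ne'⟩
  set g := dyadicDiff d n f
  have hgm : Measurable g := measurable_dyadicCondExp.sub measurable_dyadicCondExp
  by_cases hg : eLpNorm g 2 volume = ∞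
  · rw [hg, ENNReal.top_pow two_ne_zero, ENNReal.mul_top (ENNReal.ofReal_pos.2 (by positivity)).ne']
    exact le_top
  have hmean (m : Fin d → ℤ) : ∫ y in dyadicCube d (n - 1) m, g y = 0 :=
    setIntegral_dyadicDiff_eq_zero (integrableOn_dyadicCube (hf.locallyIntegrable one_le_two))
  refine (eLpNorm_ballAverage_sq_le_of_partition volume (fun _ => measurableSet_dyadicCube)
    pairwise_disjoint_dyadicCube iUnion_dyadicCube (by positivity)
    (fun _ _ hy _ hz => dist_le_of_mem_dyadicCube hy hz) hgm
    (MemLp.locallyIntegrable ⟨hgm.aestronglyMeasurable, lt_top_iff_ne_top.2 hg⟩ one_le_two)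
    hmean (r := 2 ^ (-k)) (by positivity)).trans ?_
  rw [finrank_euclideanSpace_fin, ← ENNReal.ofReal_pow (by positivity)]
  gcongr
  exact sq_dyadic_annulus_ratio_le d hkn
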